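/- The optimal value J_0^*(x_0) of the switched LQ problem equals min over all switching sequences σ ∈ Ω^N of ½ x_0ᵀ P_σ(0) x_0, where P_σ(0) is obtained from the backward Riccati recursion P_σ(N) = Ψ, P_σ(k) = ρ_{σ(k),k}(P_σ(k+1)). -/

import Mathlib

open Matrix

/-- Riccati map of mode `i` at time `k`. -/
noncomputable def riccatiMap {n nu q : ℕ}
    (A : Fin q → Matrix (Fin n) (Fin n) ℝ)
    (B : Fin q → Matrix (Fin n) (Fin nu) ℝ)
    (Q : ℕ → Matrix (Fin n) (Fin n) ℝ) (R : ℕ → Matrix (Fin nu) (Fin nu) ℝ)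
    (i : Fin q) (k : ℕ) (P : Matrix (Fin n) (Fin n) ℝ) : Matrix (Fin n) (Fin n) ℝ :=
  Q k + (A i)ᵀ * P * A i -
    (A i)ᵀ * P * B i * (R k + (B i)ᵀ * P * B i)⁻¹ * (B i)ᵀ * P * A i

/-- Feedback gain of mode `i` at time `k`. -/
noncomputable def riccatiGain {n nu q : ℕ}
    (A : Fin q → Matrix (Fin n) (Fin n) ℝ)
    (B : Fin q → Matrix (Fin n) (Fin nu) ℝ)
    (R : ℕ → Matrix (Fin nu) (Fin nu) ℝ)
    (i : Fin q) (k : ℕ) (P : Matrix (Fin n) (Fin n) ℝ) : Matrix (Fin nu) (Fin n) ℝ :=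
  (R k + (B i)ᵀ * P * B i)⁻¹ * ((B i)ᵀ * P * A i)

/-- Backward Riccati sequence along a fixed mode sequence `σ`:
`riccatiSeq ... j = P(N - j)`, with `P(N) = Ψ` and `P(k) = ρ_{σ(k),k}(P(k+1))`. -/
noncomputable def riccatiSeq {n nu q : ℕ} (N : ℕ)
    (A : Fin q → Matrix (Fin n) (Fin n) ℝ)
    (B : Fin q → Matrix (Fin n) (Fin nu) ℝ)
    (Q : ℕ → Matrix (Fin n) (Fin n) ℝ) (R : ℕ → Matrix (Fin nu) (Fin nu) ℝ)
    (Ψ : Matrix (Fin n) (Fin n) ℝ) (σ : ℕ → Fin q) : ℕ → Matrix (Fin n) (Fin n) ℝ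
  | 0 => Ψ
  | j + 1 => riccatiMap A B Q R (σ (N - (j + 1))) (N - (j + 1))
      (riccatiSeq N A B Q R Ψ σ j)

/-!
Completing the square gives, along any switching sequence `σ` and any input,
`x(k)ᵀQx(k) + u(k)ᵀRu(k) + x(k+1)ᵀP_σ(k+1)x(k+1) = x(k)ᵀP_σ(k)x(k) + ‖u(k) + K_σ(k)x(k)‖²`,
the last norm taken in the metric `R(k) + BᵀP_σ(k+1)B`, which is positive definite because every
`P_σ(k)` is positive semidefinite. Telescoping, the cost of any input along `σ` is
`x₀ᵀP_σ(0)x₀` plus a nonnegative sum that vanishes for the feedback `u = -K_σ x`. So the optimal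
cost is the minimum of `½ x₀ᵀP_σ(0)x₀` over `σ`, which exists because it depends only on the
finitely many values `σ(0), …, σ(N-1)`.
-/

section CompletionOfSquares

variable {m p : Type*} [Fintype m] [Fintype p]

lemma mulVec_dotProduct (M : Matrix m p ℝ) (v : p → ℝ) (w : m → ℝ) :
    (M *ᵥ v) ⬝ᵥ w = v ⬝ᵥ Mᵀ *ᵥ w := by
  rw [dotProduct_comm, dotProduct_mulVec, ← mulVec_transpose, dotProduct_comm]

lemma Matrix.PosSemidef.transpose_mul_mul_same {P : Matrix m m ℝ} (hP : P.PosSemidef)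
    (B : Matrix m p ℝ) : (Bᵀ * P * B).PosSemidef := by
  simpa using hP.conjTranspose_mul_mul_same B

lemma Matrix.PosSemidef.dotProduct_mulVec_self_nonneg {P : Matrix m m ℝ} (hP : P.PosSemidef)
    (x : m → ℝ) : 0 ≤ x ⬝ᵥ P *ᵥ x := by
  simpa using hP.dotProduct_mulVec_nonneg x

variable (A Q P : Matrix m m ℝ) (B : Matrix m p ℝ) (R : Matrix p p ℝ)

lemma posDef_add_transpose_mul_mul (hP : P.PosSemidef) (hR : R.PosDef) :
    (R + Bᵀ * P * B).PosDef :=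
  hR.add_posSemidef (hP.transpose_mul_mul_same B)

variable [DecidableEq p]

theorem quadratic_cost_completion (hP : P.IsSymm) (hR : R.IsSymm)
    (hS : IsUnit (R + Bᵀ * P * B).det) (x : m → ℝ) (u : p → ℝ) :
    x ⬝ᵥ Q *ᵥ x + u ⬝ᵥ R *ᵥ u + (A *ᵥ x + B *ᵥ u) ⬝ᵥ P *ᵥ (A *ᵥ x + B *ᵥ u) =
      x ⬝ᵥ (Q + Aᵀ * P * A - Aᵀ * P * B * (R + Bᵀ * P * B)⁻¹ * Bᵀ * P * A) *ᵥ x +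
      (u + ((R + Bᵀ * P * B)⁻¹ * (Bᵀ * P * A)) *ᵥ x) ⬝ᵥ
        (R + Bᵀ * P * B) *ᵥ (u + ((R + Bᵀ * P * B)⁻¹ * (Bᵀ * P * A)) *ᵥ x) := by
  set S := R + Bᵀ * P * B
  set G := Bᵀ * P * A
  have hS_symm : Sᵀ = S := by
    simp only [S, transpose_add, transpose_mul, transpose_transpose, hP.eq, hR.eq,
      Matrix.mul_assoc]
  have hG_transpose : Gᵀ = Aᵀ * P * B := by
    simp only [G, transpose_mul, transpose_transpose, hP.eq, Matrix.mul_assoc]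
  have hSK : S * (S⁻¹ * G) = G := by
    rw [← Matrix.mul_assoc, mul_nonsing_inv _ hS, Matrix.one_mul]
  have hKS : (S⁻¹ * G)ᵀ * S = Gᵀ := by
    rw [transpose_mul, transpose_nonsing_inv, hS_symm, Matrix.mul_assoc,
      nonsing_inv_mul _ hS, Matrix.mul_one]
  have hKG : (S⁻¹ * G)ᵀ * G = Gᵀ * S⁻¹ * G := by
    rw [transpose_mul, transpose_nonsing_inv, hS_symm]
  have hcorrection : Aᵀ * P * B * S⁻¹ * Bᵀ * P * A = Gᵀ * S⁻¹ * G := by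
    rw [hG_transpose]
    simp only [G, Matrix.mul_assoc]
  rw [hcorrection]
  simp only [add_mulVec, sub_mulVec, mulVec_add, dotProduct_add, add_dotProduct, dotProduct_sub,
    mulVec_mulVec, mulVec_dotProduct, ← Matrix.mul_assoc, hSK, hKS, hKG, hG_transpose]
  simp only [S, G, add_mulVec, dotProduct_add]
  ring

theorem riccati_posSemidef (hQ : Q.PosSemidef) (hP : P.PosSemidef) (hR : R.PosDef) :
    (Q + Aᵀ * P * A - Aᵀ * P * B * (R + Bᵀ * P * B)⁻¹ * Bᵀ * P * A).PosSemidef := by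
  have hP_symm : P.IsSymm := isHermitian_iff_isSymm.mp hP.isHermitian
  have hR_symm : R.IsSymm := isHermitian_iff_isSymm.mp hR.isHermitian
  have hS := posDef_add_transpose_mul_mul P B R hP hR
  refine .of_dotProduct_mulVec_nonneg ?_ fun x => ?_
  · rw [isHermitian_iff_isSymm, IsSymm]
    simp only [transpose_sub, transpose_add, transpose_mul, transpose_transpose,
      transpose_nonsing_inv, hP_symm.eq, hR_symm.eq, (isHermitian_iff_isSymm.mp hQ.isHermitian).eq,
      Matrix.mul_assoc]
  · -- the optimal input `u = -Kx` kills the square term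
    set u := -(((R + Bᵀ * P * B)⁻¹ * (Bᵀ * P * A)) *ᵥ x)
    have hcomp := quadratic_cost_completion A Q P B R hP_symm hR_symm hS.det_pos.ne'.isUnit x u
    simp only [u, neg_add_cancel, mulVec_zero, dotProduct_zero, add_zero] at hcomp
    have := hQ.dotProduct_mulVec_self_nonneg x
    have := hR.posSemidef.dotProduct_mulVec_self_nonneg u
    have := hP.dotProduct_mulVec_self_nonneg (A *ᵥ x + B *ᵥ u)
    simp only [star_trivial]
    linarith

end CompletionOfSquares

section SwitchedLQ

variable {n nu q N : ℕ} {A : Fin q → Matrix (Fin n) (Fin n) ℝ}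
  {B : Fin q → Matrix (Fin n) (Fin nu) ℝ}
  {Q : ℕ → Matrix (Fin n) (Fin n) ℝ} {R : ℕ → Matrix (Fin nu) (Fin nu) ℝ}
  {Ψ : Matrix (Fin n) (Fin n) ℝ}

lemma riccatiSeq_sub {σ : ℕ → Fin q} {k : ℕ} (hk : k < N) :
    riccatiSeq N A B Q R Ψ σ (N - k) =
      riccatiMap A B Q R (σ k) k (riccatiSeq N A B Q R Ψ σ (N - (k + 1))) := by
  obtain ⟨j, rfl⟩ : ∃ j, N = k + 1 + j := ⟨N - (k + 1), by omega⟩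
  rw [show k + 1 + j - k = j + 1 by omega, show k + 1 + j - (k + 1) = j by omega, riccatiSeq,
    show k + 1 + j - (j + 1) = k by omega]

lemma riccatiSeq_posSemidef (hQ : ∀ k, (Q k).PosSemidef) (hΨ : Ψ.PosSemidef)
    (hR : ∀ k, (R k).PosDef) (σ : ℕ → Fin q) (j : ℕ) :
    (riccatiSeq N A B Q R Ψ σ j).PosSemidef := by
  induction j with
  | zero => exact hΨ
  | succ j ih => exact riccati_posSemidef _ _ _ _ _ (hQ _) ih (hR _)

lemma riccatiSeq_congr {σ₁ σ₂ : ℕ → Fin q} (h : ∀ k < N, σ₁ k = σ₂ k) {j : ℕ} (hj : j ≤ N) :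
    riccatiSeq N A B Q R Ψ σ₁ j = riccatiSeq N A B Q R Ψ σ₂ j := by
  induction j with
  | zero => rfl
  | succ j ih =>
    simp only [riccatiSeq]
    rw [h _ (by omega), ih (by omega)]

variable (N A B Q R Ψ) in
noncomputable def switchedGain (σ : ℕ → Fin q) (k : ℕ) : Matrix (Fin nu) (Fin n) ℝ :=
  riccatiGain A B R (σ k) k (riccatiSeq N A B Q R Ψ σ (N - (k + 1)))

variable (N A B Q R Ψ) in
noncomputable def gainDefect (σ : ℕ → Fin q) (x : ℕ → Fin n → ℝ) (u : ℕ → Fin nu → ℝ)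
    (k : ℕ) : ℝ :=
  (u k + switchedGain N A B Q R Ψ σ k *ᵥ x k) ⬝ᵥ
    (R k + (B (σ k))ᵀ * riccatiSeq N A B Q R Ψ σ (N - (k + 1)) * B (σ k)) *ᵥ
      (u k + switchedGain N A B Q R Ψ σ k *ᵥ x k)

lemma gainDefect_nonneg (hQ : ∀ k, (Q k).PosSemidef) (hΨ : Ψ.PosSemidef)
    (hR : ∀ k, (R k).PosDef) (σ : ℕ → Fin q) (x : ℕ → Fin n → ℝ) (u : ℕ → Fin nu → ℝ)
    (k : ℕ) : 0 ≤ gainDefect N A B Q R Ψ σ x u k :=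
  (posDef_add_transpose_mul_mul _ _ _ (riccatiSeq_posSemidef hQ hΨ hR σ _)
    (hR k)).posSemidef.dotProduct_mulVec_self_nonneg _

theorem cost_eq_riccatiSeq_add_sum_gainDefect (hQ : ∀ k, (Q k).PosSemidef)
    (hΨ : Ψ.PosSemidef) (hR : ∀ k, (R k).PosDef) {σ : ℕ → Fin q} {x : ℕ → Fin n → ℝ}
    {u : ℕ → Fin nu → ℝ} (hdyn : ∀ k < N, x (k + 1) = A (σ k) *ᵥ x k + B (σ k) *ᵥ u k)
    {k : ℕ} (hk : k ≤ N) :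
    x N ⬝ᵥ Ψ *ᵥ x N + ∑ i ∈ Finset.Ico k N, (x i ⬝ᵥ Q i *ᵥ x i + u i ⬝ᵥ R i *ᵥ u i) =
      x k ⬝ᵥ riccatiSeq N A B Q R Ψ σ (N - k) *ᵥ x k +
        ∑ i ∈ Finset.Ico k N, gainDefect N A B Q R Ψ σ x u i := by
  induction hk using Nat.decreasingInduction with
  | self => simp [riccatiSeq]
  | of_succ k hk ih =>
    have hP := riccatiSeq_posSemidef (N := N) (A := A) (B := B) hQ hΨ hR σ (N - (k + 1))
    have hstep : x k ⬝ᵥ Q k *ᵥ x k + u k ⬝ᵥ R k *ᵥ u k +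
        x (k + 1) ⬝ᵥ riccatiSeq N A B Q R Ψ σ (N - (k + 1)) *ᵥ x (k + 1) =
          x k ⬝ᵥ riccatiMap A B Q R (σ k) k (riccatiSeq N A B Q R Ψ σ (N - (k + 1))) *ᵥ x k +
            gainDefect N A B Q R Ψ σ x u k := by
      rw [hdyn k hk]
      exact quadratic_cost_completion _ _ _ _ _ (isHermitian_iff_isSymm.mp hP.isHermitian)
        (isHermitian_iff_isSymm.mp (hR k).isHermitian)
        (posDef_add_transpose_mul_mul _ _ _ hP (hR k)).det_pos.ne'.isUnit (x k) (u k)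
    rw [Finset.sum_eq_sum_Ico_succ_bot hk, Finset.sum_eq_sum_Ico_succ_bot hk, riccatiSeq_sub hk]
    linarith

theorem riccatiSeq_le_cost (hQ : ∀ k, (Q k).PosSemidef) (hΨ : Ψ.PosSemidef)
    (hR : ∀ k, (R k).PosDef) {σ : ℕ → Fin q} {x : ℕ → Fin n → ℝ} {u : ℕ → Fin nu → ℝ}
    (hdyn : ∀ k < N, x (k + 1) = A (σ k) *ᵥ x k + B (σ k) *ᵥ u k) :
    x 0 ⬝ᵥ riccatiSeq N A B Q R Ψ σ N *ᵥ x 0 ≤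
      x N ⬝ᵥ Ψ *ᵥ x N + ∑ k ∈ Finset.range N, (x k ⬝ᵥ Q k *ᵥ x k + u k ⬝ᵥ R k *ᵥ u k) := by
  rw [Finset.range_eq_Ico, cost_eq_riccatiSeq_add_sum_gainDefect hQ hΨ hR hdyn N.zero_le,
    Nat.sub_zero]
  exact le_add_of_nonneg_right (Finset.sum_nonneg fun k _ => gainDefect_nonneg hQ hΨ hR σ x u k)

variable (N A B Q R Ψ) in
noncomputable def closedLoopState (σ : ℕ → Fin q) (x₀ : Fin n → ℝ) : ℕ → Fin n → ℝ
  | 0 => x₀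
  | k + 1 => (A (σ k) - B (σ k) * switchedGain N A B Q R Ψ σ k) *ᵥ closedLoopState σ x₀ k

theorem exists_cost_eq_riccatiSeq (hQ : ∀ k, (Q k).PosSemidef) (hΨ : Ψ.PosSemidef)
    (hR : ∀ k, (R k).PosDef) (σ : ℕ → Fin q) (x₀ : Fin n → ℝ) :
    ∃ (x : ℕ → Fin n → ℝ) (u : ℕ → Fin nu → ℝ), x 0 = x₀ ∧
      (∀ k < N, x (k + 1) = A (σ k) *ᵥ x k + B (σ k) *ᵥ u k) ∧
      x₀ ⬝ᵥ riccatiSeq N A B Q R Ψ σ N *ᵥ x₀ =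
        x N ⬝ᵥ Ψ *ᵥ x N + ∑ k ∈ Finset.range N, (x k ⬝ᵥ Q k *ᵥ x k + u k ⬝ᵥ R k *ᵥ u k) := by
  set x := closedLoopState N A B Q R Ψ σ x₀
  set u := fun k => -(switchedGain N A B Q R Ψ σ k *ᵥ x k)
  have hdyn : ∀ k < N, x (k + 1) = A (σ k) *ᵥ x k + B (σ k) *ᵥ u k := fun k _ => by
    show (A (σ k) - B (σ k) * switchedGain N A B Q R Ψ σ k) *ᵥ x k =
      A (σ k) *ᵥ x k + B (σ k) *ᵥ -(switchedGain N A B Q R Ψ σ k *ᵥ x k)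
    rw [mulVec_neg, mulVec_mulVec, ← sub_eq_add_neg, sub_mulVec]
  refine ⟨x, u, rfl, hdyn, ?_⟩
  rw [Finset.range_eq_Ico, cost_eq_riccatiSeq_add_sum_gainDefect hQ hΨ hR hdyn N.zero_le]
  have hdefect : ∀ k, gainDefect N A B Q R Ψ σ x u k = 0 := fun k => by
    simp [gainDefect, u]
  simp only [hdefect, Finset.sum_const_zero, add_zero, Nat.sub_zero]
  rfl

variable (N A B Q R Ψ) in
theorem exists_riccatiSeq_le (hq : 0 < q) (x₀ : Fin n → ℝ) :
    ∃ σ₀ : ℕ → Fin q, ∀ σ, x₀ ⬝ᵥ riccatiSeq N A B Q R Ψ σ₀ N *ᵥ x₀ ≤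
      x₀ ⬝ᵥ riccatiSeq N A B Q R Ψ σ N *ᵥ x₀ := by
  let extend (τ : Fin N → Fin q) (k : ℕ) : Fin q := if h : k < N then τ ⟨k, h⟩ else ⟨0, hq⟩
  have : Nonempty (Fin q) := ⟨⟨0, hq⟩⟩
  obtain ⟨τ₀, hτ₀⟩ := Finite.exists_min fun τ => x₀ ⬝ᵥ riccatiSeq N A B Q R Ψ (extend τ) N *ᵥ x₀
  refine ⟨extend τ₀, fun σ => ?_⟩
  have hrestrict : riccatiSeq N A B Q R Ψ (extend fun k => σ k) N = riccatiSeq N A B Q R Ψ σ N :=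
    riccatiSeq_congr (σ₁ := extend fun k => σ k) (fun k hk => dif_pos hk) le_rfl
  rw [← hrestrict]
  exact hτ₀ fun k => σ k

end SwitchedLQ

theorem stmt_13 (n nu q N : ℕ) (hq : 0 < q)
    (A : Fin q → Matrix (Fin n) (Fin n) ℝ)
    (B : Fin q → Matrix (Fin n) (Fin nu) ℝ)
    (Q : ℕ → Matrix (Fin n) (Fin n) ℝ) (R : ℕ → Matrix (Fin nu) (Fin nu) ℝ)
    (Ψ : Matrix (Fin n) (Fin n) ℝ)
    (hQ : ∀ k, (Q k).PosSemidef) (hΨ : Ψ.PosSemidef) (hR : ∀ k, (R k).PosDef)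
    (x₀ : Fin n → ℝ) :
    IsLeast
      {c : ℝ | ∃ σ : ℕ → Fin q,
        c = (1 / 2) * (x₀ ⬝ᵥ riccatiSeq N A B Q R Ψ σ N *ᵥ x₀)}
      (sInf {c : ℝ | ∃ (x : ℕ → Fin n → ℝ) (u : ℕ → Fin nu → ℝ) (σ : ℕ → Fin q),
        x 0 = x₀ ∧
        (∀ k < N, x (k + 1) = A (σ k) *ᵥ x k + B (σ k) *ᵥ u k) ∧
        c = (1 / 2) * (x N ⬝ᵥ Ψ *ᵥ x N) +
          (1 / 2) * ∑ k ∈ Finset.range N,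
            (x k ⬝ᵥ Q k *ᵥ x k + u k ⬝ᵥ R k *ᵥ u k)}) := by
  obtain ⟨σ₀, hσ₀⟩ := exists_riccatiSeq_le N A B Q R Ψ hq x₀
  have hvalue : IsLeast {c : ℝ | ∃ σ : ℕ → Fin q,
      c = (1 / 2) * (x₀ ⬝ᵥ riccatiSeq N A B Q R Ψ σ N *ᵥ x₀)}
      ((1 / 2) * (x₀ ⬝ᵥ riccatiSeq N A B Q R Ψ σ₀ N *ᵥ x₀)) :=
    ⟨⟨σ₀, rfl⟩, by rintro _ ⟨σ, rfl⟩; gcongr; exact hσ₀ σ⟩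
  convert hvalue using 1
  refine IsLeast.csInf_eq ⟨?_, ?_⟩
  · obtain ⟨x, u, hx₀, hdyn, hcost⟩ := exists_cost_eq_riccatiSeq hQ hΨ hR σ₀ x₀
    exact ⟨x, u, σ₀, hx₀, hdyn, by rw [hcost]; ring⟩
  · rintro _ ⟨x, u, σ, rfl, hdyn, rfl⟩
    have := (hσ₀ σ).trans (riccatiSeq_le_cost hQ hΨ hR hdyn)
    linarith
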